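/- arXiv:math/0508558 — 2 statements merged into one kernel-verified Lean document; each statement's English description precedes it below -/
import Mathlib

section
/- In the setting of a Lie algebra g with A₄-action and coordinate algebra (A,*), the component δ₂ satisfies δ₂(x,y) = l_y r_x − l_x r_y; explicitly, δ₂(x,y)(z) = y*(z*x) − x*(z*y) for all x,y,z ∈ A. -/
/-- The embedding `ιᵢ = φ^i ∘ ι₀` of the coordinate space `A = g₀` into `g`. -/
def iota {F : Type*} [Field F] {g : Type*} [LieRing g] [LieAlgebra F g]
    (φ : g →ₗ⁅F⁆ g) (A : Submodule F g) (i : ZMod 3) (x : A) : g :=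
  (fun z => φ z)^[i.val] (x : g)

/-! Expanding `⁅⁅ι₀ x, ι₀ y⁆, ι₂ z⁆` by the Jacobi identity and evaluating the inner brackets
with `[ι₂ z, ι₀ y] = ι₁ (z*y)` and `[ι₀ x, ι₁ w] = ι₂ (x*w)` gives `ι₂ (y*(z*x) − x*(z*y))`;
`ι₂` is injective because `φ³ = 1`. -/

section Iota

variable {F : Type*} [Field F] {g : Type*} [LieRing g] [LieAlgebra F g]
  (φ : g →ₗ⁅F⁆ g) (A : Submodule F g)

theorem iota_sub (i : ZMod 3) (a b : A) :
    iota φ A i (a - b) = iota φ A i a - iota φ A i b :=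
  iterate_map_sub (φ : g →+ g) _ _ _

theorem iota_two_injective (hφ3 : ∀ x, φ (φ (φ x)) = x) : Function.Injective (iota φ A 2) := by
  intro a b h
  have hφφ : φ (φ (a : g)) = φ (φ (b : g)) := h
  exact Subtype.ext (by simpa only [hφ3] using congrArg φ hφφ)

variable {A}

theorem lie_iota_zero_one {mul : A →ₗ[F] A →ₗ[F] A}
    (hmul : ∀ (i : ZMod 3) (x y : A),
      ⁅iota φ A i x, iota φ A (i + 1) y⁆ = iota φ A (i + 2) (mul x y)) (x w : A) :
    ⁅iota φ A 0 x, iota φ A 1 w⁆ = iota φ A 2 (mul x w) := by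
  simpa only [zero_add] using hmul 0 x w

theorem lie_iota_zero_two {mul : A →ₗ[F] A →ₗ[F] A}
    (hmul : ∀ (i : ZMod 3) (x y : A),
      ⁅iota φ A i x, iota φ A (i + 1) y⁆ = iota φ A (i + 2) (mul x y)) (x z : A) :
    ⁅iota φ A 0 x, iota φ A 2 z⁆ = -iota φ A 1 (mul z x) := by
  rw [← lie_skew]
  -- `2 + 1` and `2 + 2` reduce to `0` and `1` in `ZMod 3`
  exact congrArg Neg.neg (hmul 2 z x)

end Iota

theorem stmt6_general
    (F : Type*) [Field F]
    (g : Type*) [LieRing g] [LieAlgebra F g]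
    (φ : g →ₗ⁅F⁆ g)
    (hφ3 : ∀ x, φ (φ (φ x)) = x)
    (A : Submodule F g)
    (δ : ZMod 3 → A → A → A → A)
    (hδ : ∀ (i : ZMod 3) (x y z : A),
      ⁅⁅iota φ A 0 x, iota φ A 0 y⁆, iota φ A i z⁆ = iota φ A i (δ i x y z))
    (mul : A →ₗ[F] A →ₗ[F] A)
    (hmul : ∀ (i : ZMod 3) (x y : A),
      ⁅iota φ A i x, iota φ A (i + 1) y⁆ = iota φ A (i + 2) (mul x y))
    :
    ∀ x y z : A, δ 2 x y z = mul y (mul z x) - mul x (mul z y) := by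
  intro x y z
  apply iota_two_injective φ A hφ3
  rw [← hδ, lie_lie, lie_iota_zero_two φ hmul, lie_iota_zero_two φ hmul, lie_neg, lie_neg,
    lie_iota_zero_one φ hmul, lie_iota_zero_one φ hmul, iota_sub]
  abel

/-- In a Lie algebra with `A₄`-action and coordinate algebra `(A,*)`,
`δ₂(x,y)(z) = y*(z*x) − x*(z*y)`. -/
theorem stmt6
    (F : Type*) [Field F] (hchar : (2 : F) ≠ 0)
    (g : Type*) [LieRing g] [LieAlgebra F g]
    (τ₁ τ₂ φ : g →ₗ⁅F⁆ g)
    (hτ₁ : ∀ x, τ₁ (τ₁ x) = x) (hτ₂ : ∀ x, τ₂ (τ₂ x) = x)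
    (hcomm : ∀ x, τ₁ (τ₂ x) = τ₂ (τ₁ x))
    (hφ3 : ∀ x, φ (φ (φ x)) = x)
    (hrel1 : ∀ x, φ (τ₁ x) = τ₂ (φ x))
    (hrel2 : ∀ x, φ (τ₂ x) = τ₁ (τ₂ (φ x)))
    (A : Submodule F g)
    (hA : A = Module.End.eigenspace (τ₁ : g →ₗ[F] g) 1 ⊓
              Module.End.eigenspace (τ₂ : g →ₗ[F] g) (-1))
    (δ : ZMod 3 → A → A → A → A)
    (hδ : ∀ (i : ZMod 3) (x y z : A),
      ⁅⁅iota φ A 0 x, iota φ A 0 y⁆, iota φ A i z⁆ = iota φ A i (δ i x y z))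
    (mul : A →ₗ[F] A →ₗ[F] A)
    (hmul : ∀ (i : ZMod 3) (x y : A),
      ⁅iota φ A i x, iota φ A (i + 1) y⁆ = iota φ A (i + 2) (mul x y))
    :
    ∀ x y z : A, δ 2 x y z = mul y (mul z x) - mul x (mul z y) :=
  stmt6_general F g φ hφ3 A δ hδ mul hmul
end

section
/- In the setting of a Lie algebra g with A₄-action and coordinate algebra (A,*), the components δ_i satisfy δ₀(x, y*z) + δ₂(y, z*x) + δ₁(z, x*y) = 0 for all x,y,z ∈ A (i.e., δ₀(x,y*z) + δ₋₁(y,z*x) + δ₋₂(z,x*y) = 0 with indices mod 3). -/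
/-!
Expand `y * z = ⁅ι₁ y, ι₂ z⁆` and apply the Jacobi identity to `⁅x, y * z⁆`: the two terms are
`ι₂ ⁅x * y, z⁆` and `-ι₁ ⁅y, z * x⁆`. Bracketing with `w` and moving `φ` across the bracket
(using `φ³ = 1`) turns them into `δ₁(x * y, z) w` and `-δ₂(y, z * x) w`, so
`δ₀(x, y * z) = δ₁(x * y, z) - δ₂(y, z * x)`. Skew-symmetry of `δ₁` in its first two arguments
finishes the proof.
-/

theorem LieHom.injective_of_cube_eq_self {R L : Type*} [CommRing R] [LieRing L] [LieAlgebra R L]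
    {φ : L →ₗ⁅R⁆ L} (hφ3 : ∀ x, φ (φ (φ x)) = x) : Function.Injective φ :=
  Function.LeftInverse.injective (g := fun x => φ (φ x)) hφ3

section CoordinateAlgebra

variable {F : Type*} [Field F] {g : Type*} [LieRing g] [LieAlgebra F g]
  {φ : g →ₗ⁅F⁆ g} {A : Submodule F g}

theorem iota_zero (x : A) : iota φ A 0 x = x := rfl

theorem iota_neg (i : ZMod 3) (x : A) : iota φ A i (-x) = -iota φ A i x := by
  simp only [iota, Submodule.coe_neg]
  exact iterate_map_neg (φ : g →+ g) i.val (x : g)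

theorem iota_injective (hφ : Function.Injective φ) (i : ZMod 3) :
    Function.Injective (iota φ A i) :=
  (hφ.iterate _).comp Subtype.val_injective

variable (hφ3 : ∀ x, φ (φ (φ x)) = x) {δ : ZMod 3 → A → A → A → A}
  (hδ : ∀ (i : ZMod 3) (x y z : A),
    ⁅⁅iota φ A 0 x, iota φ A 0 y⁆, iota φ A i z⁆ = iota φ A i (δ i x y z))
  {mul : A →ₗ[F] A →ₗ[F] A}
  (hmul : ∀ (i : ZMod 3) (x y : A),
    ⁅iota φ A i x, iota φ A (i + 1) y⁆ = iota φ A (i + 2) (mul x y))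

include hφ3 hδ in
theorem delta_swap (i : ZMod 3) (a b c : A) : δ i b a c = -δ i a b c := by
  apply iota_injective (LieHom.injective_of_cube_eq_self hφ3) i
  rw [iota_neg, ← hδ, ← hδ, ← neg_lie, lie_skew]

include hφ3 hδ in
theorem lie_map_map_lie_eq_delta_one (a b c : A) :
    ⁅φ (φ ⁅(a : g), (b : g)⁆), (c : g)⁆ = δ 1 a b c := by
  conv_lhs => rw [← hφ3 (c : g)]
  rw [← LieHom.map_lie, ← LieHom.map_lie]
  exact (congrArg (fun u => φ (φ u)) (hδ 1 a b c)).trans (hφ3 _)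

include hφ3 hδ in
theorem lie_map_lie_eq_delta_two (a b c : A) :
    ⁅φ ⁅(a : g), (b : g)⁆, (c : g)⁆ = δ 2 a b c := by
  conv_lhs => rw [← hφ3 (c : g)]
  rw [← LieHom.map_lie]
  exact (congrArg φ (hδ 2 a b c)).trans (hφ3 _)

include hmul in
theorem lie_mul_eq (x y z : A) :
    ⁅(x : g), (mul y z : g)⁆ = φ (φ ⁅(mul x y : g), (z : g)⁆) - φ ⁅(y : g), (mul z x : g)⁆ := by
  have hxz : ⁅(x : g), φ (φ z)⁆ = -φ (mul z x) := by
    rw [← lie_skew]; exact congrArg Neg.neg (hmul 2 z x)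
  rw [← show ⁅φ y, φ (φ z)⁆ = (mul y z : g) from hmul 1 y z, leibniz_lie,
    show ⁅(x : g), φ y⁆ = φ (φ (mul x y)) from hmul 0 x y, hxz, lie_neg,
    LieHom.map_lie, LieHom.map_lie, LieHom.map_lie, sub_eq_add_neg]

include hφ3 hδ hmul in
theorem delta_zero_mul (x y z w : A) :
    δ 0 x (mul y z) w = δ 1 (mul x y) z w - δ 2 y (mul z x) w := by
  apply Subtype.ext
  rw [Submodule.coe_sub, ← iota_zero (δ 0 x (mul y z) w), ← hδ, iota_zero, iota_zero,
    iota_zero, lie_mul_eq hmul, sub_lie, lie_map_map_lie_eq_delta_one hφ3 hδ,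
    lie_map_lie_eq_delta_two hφ3 hδ]

end CoordinateAlgebra

theorem stmt8_general
    (F : Type*) [Field F]
    (g : Type*) [LieRing g] [LieAlgebra F g]
    (φ : g →ₗ⁅F⁆ g)
    (hφ3 : ∀ x, φ (φ (φ x)) = x)
    (A : Submodule F g)
    (δ : ZMod 3 → A → A → A → A)
    (hδ : ∀ (i : ZMod 3) (x y z : A),
      ⁅⁅iota φ A 0 x, iota φ A 0 y⁆, iota φ A i z⁆ = iota φ A i (δ i x y z))
    (mul : A →ₗ[F] A →ₗ[F] A)
    (hmul : ∀ (i : ZMod 3) (x y : A),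
      ⁅iota φ A i x, iota φ A (i + 1) y⁆ = iota φ A (i + 2) (mul x y))
    :
    ∀ x y z w : A,
      δ 0 x (mul y z) w + δ 2 y (mul z x) w + δ 1 z (mul x y) w = 0 := by
  intro x y z w
  rw [delta_zero_mul hφ3 hδ hmul, delta_swap hφ3 hδ 1 z]
  abel

/-- In a Lie algebra with `A₄`-action and coordinate algebra `(A,*)`,
`δ₀(x,y*z) + δ₂(y,z*x) + δ₁(z,x*y) = 0` as operators on `A`. -/
theorem stmt8
    (F : Type*) [Field F] (hchar : (2 : F) ≠ 0)
    (g : Type*) [LieRing g] [LieAlgebra F g]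
    (τ₁ τ₂ φ : g →ₗ⁅F⁆ g)
    (hτ₁ : ∀ x, τ₁ (τ₁ x) = x) (hτ₂ : ∀ x, τ₂ (τ₂ x) = x)
    (hcomm : ∀ x, τ₁ (τ₂ x) = τ₂ (τ₁ x))
    (hφ3 : ∀ x, φ (φ (φ x)) = x)
    (hrel1 : ∀ x, φ (τ₁ x) = τ₂ (φ x))
    (hrel2 : ∀ x, φ (τ₂ x) = τ₁ (τ₂ (φ x)))
    (A : Submodule F g)
    (hA : A = Module.End.eigenspace (τ₁ : g →ₗ[F] g) 1 ⊓
              Module.End.eigenspace (τ₂ : g →ₗ[F] g) (-1))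
    (δ : ZMod 3 → A → A → A → A)
    (hδ : ∀ (i : ZMod 3) (x y z : A),
      ⁅⁅iota φ A 0 x, iota φ A 0 y⁆, iota φ A i z⁆ = iota φ A i (δ i x y z))
    (mul : A →ₗ[F] A →ₗ[F] A)
    (hmul : ∀ (i : ZMod 3) (x y : A),
      ⁅iota φ A i x, iota φ A (i + 1) y⁆ = iota φ A (i + 2) (mul x y))
    :
    ∀ x y z w : A,
      δ 0 x (mul y z) w + δ 2 y (mul z x) w + δ 1 z (mul x y) w = 0 :=
  stmt8_general F g φ hφ3 A δ hδ mul hmul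
end
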